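/- arXiv:2403.04663 — 2 statements merged into one kernel-verified Lean document; each statement's English description precedes it below -/
import Mathlib

section
/- Let L/K be a finite Galois extension of fields and V a finite-dimensional L-vector space equipped with a semilinear action of Gal(L/K) (i.e., σ(a·v) = σ(a)·σ(v) for a ∈ L, v ∈ V). Then the natural map L ⊗_K V^{Gal(L/K)} → V, a ⊗ v ↦ a·v, is an isomorphism of L-vector spaces. -/
open scoped TensorProduct

/-- The `K`-subspace of vectors of `V` invariant under a semilinear action of
`Gal(L/K)` on the `L`-vector space `V`. -/
def galoisInvariants {K L V : Type*} [Field K] [Field L] [Algebra K L]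
    [AddCommGroup V] [Module K V] [Module L V] [IsScalarTower K L V]
    (ρ : (L ≃ₐ[K] L) →* Multiplicative (AddAut V))
    (hρ : ∀ (σ : L ≃ₐ[K] L) (a : L) (v : V), Multiplicative.toAdd (ρ σ) (a • v) = σ a • Multiplicative.toAdd (ρ σ) v) :
    Submodule K V where
  carrier := {v | ∀ σ : L ≃ₐ[K] L, Multiplicative.toAdd (ρ σ) v = v}
  add_mem' := by
    intro x y hx hy σ
    rw [map_add, hx σ, hy σ]
  zero_mem' := by
    intro σ
    exact map_zero _
  smul_mem' := by
    intro c v hv σ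
    have h1 : (c : K) • v = (algebraMap K L c) • v := (algebraMap_smul L c v).symm
    rw [h1, hρ σ (algebraMap K L c) v, hv σ, AlgEquiv.commutes, algebraMap_smul]

/-!
The natural map is injective because `K`-linearly independent invariant vectors stay
`L`-linearly independent: multiplying an `L`-relation `∑ gᵢ wᵢ = 0` by `b` and summing its
Galois conjugates gives the `K`-relation `∑ Tr(gᵢ b) wᵢ = 0`, so every `Tr(gᵢ b)` vanishes and
nondegeneracy of the trace form forces `gᵢ = 0`. It is surjective because the invariants span:
a functional `f` killing the invariants kills `∑ σ (σ a) • σ v` for every `a`, and Dedekind's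
independence of characters then gives `f (σ v) = 0` for every `σ`, in particular `f v = 0`.
-/

theorem AlgEquiv.eq_zero_of_forall_sum_mul_apply_eq_zero {K L : Type*} [Field K] [Field L]
    [Algebra K L] [FiniteDimensional K L] {c : (L ≃ₐ[K] L) → L}
    (hc : ∀ a, ∑ σ, c σ * σ a = 0) (σ : L ≃ₐ[K] L) : c σ = 0 := by
  have hli : LinearIndependent L fun σ : L ≃ₐ[K] L => (σ : L → L) :=
    (linearIndependent_monoidHom L L).comp (fun σ : L ≃ₐ[K] L => (σ : L →* L))
      fun σ τ h => AlgEquiv.ext fun a => DFunLike.congr_fun h a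
  refine Fintype.linearIndependent_iff.mp hli c (funext fun a => ?_) σ
  simpa [Finset.sum_apply] using hc a

section GaloisInvariants

variable {K L V : Type*} [Field K] [Field L] [Algebra K L] [FiniteDimensional K L]
    [AddCommGroup V] [Module K V] [Module L V] [IsScalarTower K L V]
    (ρ : (L ≃ₐ[K] L) →* Multiplicative (AddAut V))
    (hρ : ∀ (σ : L ≃ₐ[K] L) (a : L) (v : V), Multiplicative.toAdd (ρ σ) (a • v) = σ a • Multiplicative.toAdd (ρ σ) v)

theorem sum_galoisAction_mem_galoisInvariants (v : V) :
    ∑ σ, Multiplicative.toAdd (ρ σ) v ∈ galoisInvariants ρ hρ := by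
  intro τ
  rw [map_sum]
  refine Fintype.sum_equiv (Equiv.mulLeft τ) _ _ fun σ => ?_
  rw [Equiv.coe_mulLeft, map_mul]
  rfl

theorem span_galoisInvariants_eq_top :
    Submodule.span L (galoisInvariants ρ hρ : Set V) = ⊤ := by
  refine Submodule.eq_top_iff'.mpr fun v => by_contra fun hv => ?_
  obtain ⟨f, hfv, hf⟩ := Submodule.exists_dual_map_eq_bot_of_notMem hv inferInstance
  have hc : ∀ a : L, ∑ σ, f (Multiplicative.toAdd (ρ σ) v) * σ a = 0 := by
    intro a
    have hmem := Submodule.mem_map_of_mem (f := f) <| Submodule.subset_span <|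
      sum_galoisAction_mem_galoisInvariants ρ hρ (a • v)
    rw [hf, Submodule.mem_bot, map_sum] at hmem
    simpa [hρ, mul_comm] using hmem
  exact hfv (by simpa using AlgEquiv.eq_zero_of_forall_sum_mul_apply_eq_zero hc 1)

theorem linearIndependent_coe_galoisInvariants [IsGalois K L] {ι : Type*}
    {w : ι → galoisInvariants ρ hρ} (hw : LinearIndependent K w) :
    LinearIndependent L fun i => (w i : V) := by
  rw [linearIndependent_iff'] at hw ⊢
  intro s g hg i hi
  have htrace : ∀ b : L, ∀ i ∈ s, Algebra.trace K L (g i * b) = 0 := by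
    intro b
    refine hw s (fun i => Algebra.trace K L (g i * b)) (Subtype.ext ?_)
    rw [Submodule.coe_sum, Submodule.coe_zero]
    calc ∑ i ∈ s, ((Algebra.trace K L (g i * b) • w i : galoisInvariants ρ hρ) : V)
        = ∑ i ∈ s, ∑ σ : L ≃ₐ[K] L, σ (g i * b) • (w i : V) := by
          refine Finset.sum_congr rfl fun i _ => ?_
          rw [Submodule.coe_smul_of_tower, ← algebraMap_smul L, trace_eq_sum_automorphisms,
            Finset.sum_smul]
      _ = ∑ σ, Multiplicative.toAdd (ρ σ) (∑ i ∈ s, (g i * b) • (w i : V)) := by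
          rw [Finset.sum_comm]
          simp only [map_sum, hρ, (w _).2 _]
      _ = 0 := by
          simp only [mul_comm _ b, ← smul_smul, ← Finset.smul_sum, hg, smul_zero, map_zero,
            Finset.sum_const_zero]
  exact (traceForm_nondegenerate K L).1 (g i) fun b => htrace b i hi

end GaloisInvariants

theorem statement12_general {K L V : Type*} [Field K] [Field L] [Algebra K L]
    [FiniteDimensional K L] [IsGalois K L]
    [AddCommGroup V] [Module K V] [Module L V] [IsScalarTower K L V]
    (ρ : (L ≃ₐ[K] L) →* Multiplicative (AddAut V))
    (hρ : ∀ (σ : L ≃ₐ[K] L) (a : L) (v : V), Multiplicative.toAdd (ρ σ) (a • v) = σ a • Multiplicative.toAdd (ρ σ) v) :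
    ∃ e : (L ⊗[K] (galoisInvariants ρ hρ)) ≃ₗ[L] V,
      ∀ (a : L) (v : galoisInvariants ρ hρ), e (a ⊗ₜ v) = a • (v : V) := by
  let W := galoisInvariants ρ hρ
  let b := Module.Basis.ofVectorSpace K W
  let φ : L ⊗[K] W →ₗ[L] V := W.subtype.liftBaseChange L
  have hφ : φ = (b.baseChange L).constr L fun i => (b i : V) :=
    (b.baseChange L).ext fun i => by
      rw [Module.Basis.constr_basis, Module.Basis.baseChange_apply]
      exact one_smul L _
  have hinj : Function.Injective φ := hφ ▸ (b.baseChange L).injective_constr_of_linearIndependent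
    (linearIndependent_coe_galoisInvariants ρ hρ b.linearIndependent)
  have hsurj : Function.Surjective φ := by
    rw [← LinearMap.range_eq_top, eq_top_iff, ← span_galoisInvariants_eq_top ρ hρ,
      Submodule.span_le]
    exact fun v hv => ⟨1 ⊗ₜ ⟨v, hv⟩, one_smul L v⟩
  exact ⟨.ofBijective φ ⟨hinj, hsurj⟩, fun _ _ => rfl⟩

/-- (Galois descent.)  Let `L/K` be a finite Galois extension and `V`
a finite-dimensional `L`-vector space equipped with a semilinear action of `Gal(L/K)`,
i.e. `σ(a·v) = σ(a)·σ(v)`.  Then the natural map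
`L ⊗_K V^{Gal(L/K)} → V`, `a ⊗ v ↦ a·v`, is an isomorphism of `L`-vector spaces. -/
theorem statement12 {K L V : Type*} [Field K] [Field L] [Algebra K L]
    [FiniteDimensional K L] [IsGalois K L]
    [AddCommGroup V] [Module K V] [Module L V] [IsScalarTower K L V]
    [FiniteDimensional L V]
    (ρ : (L ≃ₐ[K] L) →* Multiplicative (AddAut V))
    (hρ : ∀ (σ : L ≃ₐ[K] L) (a : L) (v : V), Multiplicative.toAdd (ρ σ) (a • v) = σ a • Multiplicative.toAdd (ρ σ) v) :
    ∃ e : (L ⊗[K] (galoisInvariants ρ hρ)) ≃ₗ[L] V,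
      ∀ (a : L) (v : galoisInvariants ρ hρ), e (a ⊗ₜ v) = a • (v : V) :=
  statement12_general ρ hρ
end

section
/- Let D be a finite-dimensional division algebra over a p-adic local field K with Schur index s, and let τ be an automorphism of D of p-power order whose restriction to K has fixed field k with [K:k] a power of p, with e | [K:k]. Assume the residue field order q_τ of the fixed field satisfies s | q_τ - 1. Then the fixed division subalgebra D^{⟨τ^e⟩} has centre K^{⟨τ^e⟩}, satisfies dim_{D^{⟨τ^e⟩}} D = [K : K^{⟨τ^e⟩}], and has Schur index s. -/
/-!
Galois descent along the cyclic group generated by `σ = τ^e`. Let `n` be the order of `σ` on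
`K` and `k = K^σ`. The orbit sums `x ↦ ∑_{i<n} σⁱ x` map `D` into `D^σ`; combined with
Dedekind's independence of `σ⁰, …, σⁿ⁻¹` on `K` they show that `D^σ` spans `D` over `K`
(a functional vanishing on `D^σ` kills all orbit sums of `y z`, hence `z`), and that a
`K`-linear relation `∑ gᵢ dᵢ = 0` among elements of `D^σ` yields, after multiplying by `y`
and taking orbit sums, the relation `∑ Tr(y gᵢ) dᵢ = 0` with coefficients in `k`. So
`D ≅ K ⊗_k D^σ`. An element central in `D^σ` then commutes with `K · D^σ = D`, so lies in
`K ∩ D^σ = k`; hence `dim_k D^σ = dim_K D = s²`, and comparing the towers `k ⊆ D^σ ⊆ D` and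
`k ⊆ K ⊆ D` gives `[D : D^σ] = [K : k]`.
-/

def fixedSubring {D : Type*} [Ring D] (σ : D ≃+* D) : Subring D :=
  RingHom.eqLocus (σ : D →+* D) (RingHom.id D)

def fixedSubfield {K : Type*} [Field K] (σ : K ≃+* K) : Subfield K where
  carrier := {x | σ x = x}
  zero_mem' := map_zero σ
  one_mem' := map_one σ
  add_mem' := by intro x y hx hy; simp only [Set.mem_setOf_eq, map_add] at *; rw [hx, hy]
  mul_mem' := by intro x y hx hy; simp only [Set.mem_setOf_eq, map_mul] at *; rw [hx, hy]
  neg_mem' := by intro x hx; simp only [Set.mem_setOf_eq, map_neg] at *; rw [hx]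
  inv_mem' := by intro x hx; simp only [Set.mem_setOf_eq, map_inv₀] at *; rw [hx]

open Finset Module

theorem orderOf_pow_eq_orderOf_pow {G H : Type*} [Monoid G] [Monoid H] {x : G} {y : H}
    (h : orderOf x = orderOf y) (e : ℕ) : orderOf (x ^ e) = orderOf (y ^ e) := by
  rcases eq_or_ne e 0 with rfl | he
  · simp only [pow_zero, orderOf_one]
  · rw [orderOf_pow' x he, orderOf_pow' y he, h]

theorem eq_zero_of_forall_sum_pow_apply_mul_eq_zero {K : Type*} [Field K] {σ : K ≃+* K}
    {c : ℕ → K} (h : ∀ y, ∑ i ∈ range (orderOf σ), (σ ^ i) y * c i = 0) :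
    ∀ i < orderOf σ, c i = 0 := by
  have hinj :
      Function.Injective fun i : Fin (orderOf σ) => ((σ ^ (i : ℕ) : K ≃+* K) : K →* K) :=
    fun i j hij => Fin.ext <| pow_injOn_Iio_orderOf i.isLt j.isLt <|
      RingEquiv.ext fun y => DFunLike.congr_fun hij y
  intro i hi
  refine Fintype.linearIndependent_iff.mp ((linearIndependent_monoidHom K K).comp _ hinj)
    (fun j => c j) (funext fun y => ?_) ⟨i, hi⟩
  simpa [sum_range, mul_comm] using h y

theorem pow_apply_algebraMap {K D : Type*} [CommSemiring K] [Semiring D] [Algebra K D]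
    {σD : D ≃+* D} {σK : K ≃+* K}
    (hcompat : ∀ y, σD (algebraMap K D y) = algebraMap K D (σK y)) (n : ℕ) (y : K) :
    (σD ^ n) (algebraMap K D y) = algebraMap K D ((σK ^ n) y) := by
  simp only [RingAut.coe_pow]
  exact ((Function.Semiconj.iterate_right (fun y => (hcompat y).symm) n) y).symm

section orbitSum

variable {R : Type*} [Ring R] (σ : R ≃+* R)

def orbitSum (n : ℕ) : R →+ R := ∑ i ∈ range n, ((σ ^ i : R ≃+* R) : R →+ R)

theorem orbitSum_apply (n : ℕ) (x : R) : orbitSum σ n x = ∑ i ∈ range n, (σ ^ i) x := by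
  simp [orbitSum]

theorem orbitSum_mem_fixedSubring {n : ℕ} (hσ : σ ^ n = 1) (x : R) :
    orbitSum σ n x ∈ fixedSubring σ := by
  set f : ℕ → R := fun i => (σ ^ i) x
  have hshift : σ (orbitSum σ n x) = ∑ i ∈ range n, f (i + 1) := by
    simp only [orbitSum_apply, map_sum, f, pow_succ', RingAut.mul_apply]
  have hf : f n = f 0 := by simp only [f, hσ, pow_zero]
  show σ (orbitSum σ n x) = orbitSum σ n x
  rw [hshift, orbitSum_apply]
  refine add_right_cancel (b := f 0) ?_
  rw [← sum_range_succ', sum_range_succ, hf]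

end orbitSum

-- A `Subfield` of a division ring is a division subring; going through it keeps the ring
-- structure definitionally that of the `Subring`.
abbrev fixedSubring.divisionRing {D : Type*} [DivisionRing D] (σ : D ≃+* D) :
    DivisionRing (fixedSubring σ) :=
  inferInstanceAs <| DivisionRing
    ({ fixedSubring σ with
        inv_mem' := fun x (hx : σ x = x) => show σ x⁻¹ = x⁻¹ by rw [map_inv₀, hx] } : Subfield D)

section Descent

attribute [local instance] fixedSubring.divisionRing

variable {K D : Type*} [Field K] [DivisionRing D] [Algebra K D] {σD : D ≃+* D} {σK : K ≃+* K}

theorem orbitSum_algebraMap_mul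
    (hcompat : ∀ y, σD (algebraMap K D y) = algebraMap K D (σK y)) (n : ℕ) (y : K) (z : D) :
    orbitSum σD n (algebraMap K D y * z) =
      ∑ i ∈ range n, algebraMap K D ((σK ^ i) y) * (σD ^ i) z := by
  simp only [orbitSum_apply, map_mul, pow_apply_algebraMap hcompat]

theorem orbitSum_algebraMap_mul_of_mem
    (hcompat : ∀ y, σD (algebraMap K D y) = algebraMap K D (σK y)) (n : ℕ) (y : K)
    {d : D} (hd : d ∈ fixedSubring σD) :
    orbitSum σD n (algebraMap K D y * d) = algebraMap K D (orbitSum σK n y) * d := by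
  simp only [orbitSum_algebraMap_mul hcompat, RingAut.coe_pow,
    Function.iterate_fixed (show σD d = d from hd), orbitSum_apply, map_sum, sum_mul]

theorem span_fixedSubring_eq_top
    (hcompat : ∀ y, σD (algebraMap K D y) = algebraMap K D (σK y))
    (hfin : IsOfFinOrder σK) (hσ : σD ^ orderOf σK = 1) :
    Submodule.span K (fixedSubring σD : Set D) = ⊤ := by
  refine eq_top_iff.2 fun z _ => by_contra fun hz => ?_
  obtain ⟨f, hfz, hle⟩ := Submodule.exists_le_ker_of_notMem hz
  have hsum : ∀ y : K, ∑ i ∈ range (orderOf σK), (σK ^ i) y * f ((σD ^ i) z) = 0 := by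
    intro y
    have hmem := hle <| Submodule.subset_span <|
      orbitSum_mem_fixedSubring σD hσ (algebraMap K D y * z)
    rw [LinearMap.mem_ker, orbitSum_algebraMap_mul hcompat, map_sum] at hmem
    simpa only [← Algebra.smul_def, map_smul, smul_eq_mul] using hmem
  exact hfz (eq_zero_of_forall_sum_pow_apply_mul_eq_zero hsum 0 hfin.orderOf_pos)

theorem mem_center_fixedSubring_iff
    (hcentral : ∀ z : D, z ∈ Subring.center D ↔ ∃ y : K, algebraMap K D y = z)
    (hcompat : ∀ y, σD (algebraMap K D y) = algebraMap K D (σK y))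
    (hfin : IsOfFinOrder σK) (hσ : σD ^ orderOf σK = 1) (x : fixedSubring σD) :
    x ∈ Subring.center (fixedSubring σD) ↔ ∃ y : K, σK y = y ∧ algebraMap K D y = x := by
  constructor
  · intro hx
    have hcomm : ∀ z ∈ Submodule.span K (fixedSubring σD : Set D), Commute (x : D) z := by
      intro z hz
      induction hz using Submodule.span_induction with
      | mem w hw => exact congrArg Subtype.val (Subring.mem_center_iff.1 hx ⟨w, hw⟩) |>.symm
      | zero => exact Commute.zero_right _
      | add _ _ _ _ h₁ h₂ => exact h₁.add_right h₂
      | smul y _ _ h =>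
        rw [Algebra.smul_def]
        exact (Algebra.commute_algebraMap_left y _).symm.mul_right h
    obtain ⟨y, hy⟩ := (hcentral x).1 <| Subring.mem_center_iff.2 fun z =>
      (hcomm z (span_fixedSubring_eq_top hcompat hfin hσ ▸ Submodule.mem_top)).eq.symm
    refine ⟨y, (algebraMap K D).injective ?_, hy⟩
    rw [← hcompat, hy]
    exact x.2
  · rintro ⟨y, -, hy⟩
    refine Subring.mem_center_iff.2 fun g => Subtype.ext ?_
    simp only [Subring.coe_mul, ← hy]
    exact (Algebra.commutes y (g : D)).symm

def fixedSubfieldToCenter (hcompat : ∀ y, σD (algebraMap K D y) = algebraMap K D (σK y)) :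
    fixedSubfield σK →+* Subring.center (fixedSubring σD) :=
  (((algebraMap K D).comp (fixedSubfield σK).subtype).codRestrict (fixedSubring σD)
    fun c => (hcompat c).trans (congrArg _ c.2)).codRestrict _
    fun c => Subring.mem_center_iff.2 fun g => Subtype.ext (Algebra.commutes c.1 (g : D)).symm

theorem bijective_fixedSubfieldToCenter
    (hcentral : ∀ z : D, z ∈ Subring.center D ↔ ∃ y : K, algebraMap K D y = z)
    (hcompat : ∀ y, σD (algebraMap K D y) = algebraMap K D (σK y))
    (hfin : IsOfFinOrder σK) (hσ : σD ^ orderOf σK = 1) :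
    Function.Bijective (fixedSubfieldToCenter hcompat) := by
  refine ⟨(fixedSubfieldToCenter hcompat).injective, fun z => ?_⟩
  obtain ⟨y, hyfix, hy⟩ := (mem_center_fixedSubring_iff hcentral hcompat hfin hσ z).1 z.2
  exact ⟨⟨y, hyfix⟩, Subtype.ext (Subtype.ext hy)⟩

theorem linearIndependent_coe_of_linearIndependent_center
    (hcompat : ∀ y, σD (algebraMap K D y) = algebraMap K D (σK y))
    (hfin : IsOfFinOrder σK) {ι : Type*} {b : ι → fixedSubring σD}
    (hb : LinearIndependent (Subring.center (fixedSubring σD)) b) :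
    LinearIndependent K fun i => (b i : D) := by
  rw [linearIndependent_iff'] at hb ⊢
  intro s g hg j hj
  have hsum : ∀ y : K, ∑ i ∈ range (orderOf σK), (σK ^ i) y * (σK ^ i) (g j) = 0 := by
    intro y
    let t : ι → fixedSubfield σK := fun i =>
      ⟨orbitSum σK (orderOf σK) (y * g i),
        orbitSum_mem_fixedSubring σK (pow_orderOf_eq_one σK) _⟩
    have hrel : ∑ i ∈ s, fixedSubfieldToCenter hcompat (t i) • b i = 0 := by
      have hcoe :
          ((∑ i ∈ s, fixedSubfieldToCenter hcompat (t i) • b i : fixedSubring σD) : D) =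
            orbitSum σD (orderOf σK) (algebraMap K D y * ∑ i ∈ s, g i • (b i : D)) := by
        rw [mul_sum, map_sum, AddSubmonoidClass.coe_finsetSum]
        refine sum_congr rfl fun i _ => ?_
        rw [Algebra.smul_def (g i), ← mul_assoc, ← map_mul,
          orbitSum_algebraMap_mul_of_mem hcompat _ _ (b i).2]
        rfl
      rw [hg, mul_zero, map_zero] at hcoe
      exact Subtype.ext hcoe
    have ht := congrArg Subtype.val <| (fixedSubfieldToCenter hcompat).injective.eq_iff.1 <|
      (hb s _ hrel j hj).trans (map_zero _).symm
    simpa only [t, orbitSum_apply, map_mul, ZeroMemClass.coe_zero] using ht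
  simpa using eq_zero_of_forall_sum_pow_apply_mul_eq_zero hsum 0 hfin.orderOf_pos

theorem rank_center_fixedSubring
    (hcentral : ∀ z : D, z ∈ Subring.center D ↔ ∃ y : K, algebraMap K D y = z)
    (hcompat : ∀ y, σD (algebraMap K D y) = algebraMap K D (σK y))
    (hfin : IsOfFinOrder σK) (hσ : σD ^ orderOf σK = 1) :
    Module.rank (Subring.center (fixedSubring σD)) (fixedSubring σD) = Module.rank K D := by
  let b := Basis.ofVectorSpace (Subring.center (fixedSubring σD)) (fixedSubring σD)
  have hspan : ⊤ ≤ Submodule.span K (Set.range fun i => (b i : D)) := by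
    suffices h : ∀ w ∈ Submodule.span (Subring.center (fixedSubring σD)) (Set.range b),
        (w : D) ∈ Submodule.span K (Set.range fun i => (b i : D)) by
      rw [← span_fixedSubring_eq_top hcompat hfin hσ, Submodule.span_le]
      exact fun a ha => h ⟨a, ha⟩ (b.span_eq ▸ Submodule.mem_top)
    intro w hw
    induction hw using Submodule.span_induction with
    | mem w hw =>
      obtain ⟨i, rfl⟩ := hw
      exact Submodule.subset_span ⟨i, rfl⟩
    | zero => exact zero_mem _
    | add _ _ _ _ h₁ h₂ => exact add_mem h₁ h₂
    | smul c w _ h =>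
      obtain ⟨y, -, hy⟩ := (mem_center_fixedSubring_iff hcentral hcompat hfin hσ c).1 c.2
      have hcw : ((c • w : fixedSubring σD) : D) = y • (w : D) := by
        rw [Algebra.smul_def y, hy]
        rfl
      rw [hcw]
      exact Submodule.smul_mem _ y h
  let bK : Basis _ K D :=
    Basis.mk (linearIndependent_coe_of_linearIndependent_center hcompat hfin b.linearIndependent)
      hspan
  rw [← b.mk_eq_rank'', ← bK.mk_eq_rank'']

theorem finrank_center_fixedSubring
    (hcentral : ∀ z : D, z ∈ Subring.center D ↔ ∃ y : K, algebraMap K D y = z)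
    (hcompat : ∀ y, σD (algebraMap K D y) = algebraMap K D (σK y))
    (hfin : IsOfFinOrder σK) (hσ : σD ^ orderOf σK = 1) :
    finrank (Subring.center (fixedSubring σD)) (fixedSubring σD) = finrank K D :=
  congrArg Cardinal.toNat (rank_center_fixedSubring hcentral hcompat hfin hσ)

theorem finrank_fixedSubring_eq_finrank_fixedSubfield [FiniteDimensional K D]
    (hcentral : ∀ z : D, z ∈ Subring.center D ↔ ∃ y : K, algebraMap K D y = z)
    (hcompat : ∀ y, σD (algebraMap K D y) = algebraMap K D (σK y))
    (hfin : IsOfFinOrder σK) (hσ : σD ^ orderOf σK = 1) :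
    finrank (fixedSubring σD) D = finrank (fixedSubfield σK) K := by
  have hcenter : finrank (fixedSubfield σK) D = finrank (Subring.center (fixedSubring σD)) D :=
    congrArg Cardinal.toNat <| rank_eq_of_equiv_equiv (fixedSubfieldToCenter hcompat)
      (AddEquiv.refl D) (bijective_fixedSubfieldToCenter hcentral hcompat hfin hσ)
      fun c x => Algebra.smul_def (c : K) x
  have htower := finrank_mul_finrank (Subring.center (fixedSubring σD)) (fixedSubring σD) D
  rw [finrank_center_fixedSubring hcentral hcompat hfin hσ, ← hcenter,
    ← finrank_mul_finrank (fixedSubfield σK) K D, mul_comm (finrank _ K)] at htower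
  exact Nat.eq_of_mul_eq_mul_left finrank_pos htower

end Descent

theorem statement19_general {p : ℕ} [Fact p.Prime]
    {K D : Type*} [Field K]
    [DivisionRing D] [Algebra K D] [FiniteDimensional K D]
    (hcentral : ∀ z : D, z ∈ Subring.center D ↔ ∃ y : K, algebraMap K D y = z)
    (s : ℕ) (hs : Module.finrank K D = s ^ 2)
    (τD : D ≃+* D) (τK : K ≃+* K)
    (hcompat : ∀ y : K, τD (algebraMap K D y) = algebraMap K D (τK y))
    (m : ℕ) (hτD : orderOf τD = p ^ m) (hτK : orderOf τK = p ^ m)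
    (e : ℕ) :
    (∀ x : ↥(fixedSubring (τD ^ e)),
      x ∈ Subring.center ↥(fixedSubring (τD ^ e)) ↔
        ∃ y : K, (τK ^ e) y = y ∧ algebraMap K D y = (x : D)) ∧
    Module.finrank ↥(fixedSubring (τD ^ e)) D =
      Module.finrank ↥(fixedSubfield (τK ^ e)) K ∧
    Module.finrank ↥(Subring.center ↥(fixedSubring (τD ^ e)))
      ↥(fixedSubring (τD ^ e)) = s ^ 2 := by
  have hfin : IsOfFinOrder (τK ^ e) :=
    (orderOf_pos_iff.1 (hτK ▸ pow_pos (Fact.out : p.Prime).pos m)).pow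
  have hσ : (τD ^ e) ^ orderOf (τK ^ e) = 1 := by
    rw [← orderOf_pow_eq_orderOf_pow (hτD.trans hτK.symm)]
    exact pow_orderOf_eq_one _
  have hcompat' := pow_apply_algebraMap hcompat e
  exact ⟨mem_center_fixedSubring_iff hcentral hcompat' hfin hσ,
    finrank_fixedSubring_eq_finrank_fixedSubfield hcentral hcompat' hfin hσ,
    (finrank_center_fixedSubring hcentral hcompat' hfin hσ).trans hs⟩

/-- Let `D` be a finite-dimensional division algebra with centre a
`p`-adic local field `K` and Schur index `s` (`dim_K D = s²`), and let `τ` be an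
automorphism of `D` of `p`-power order `d` restricting on `K` to a Galois automorphism
`τK` of the same `p`-power order `d` (so the fixed field `k` of `τK` satisfies
`[K:k] = d`, a power of `p`), and let `e ∣ d`.  Assume the fixed field contains a
primitive `(qτ - 1)`-st root of unity with `s ∣ qτ - 1` (the residue condition).
Then the fixed division subalgebra `D^⟨τ^e⟩` has centre `K^⟨τ^e⟩`, satisfies
`dim_{D^⟨τ^e⟩} D = [K : K^⟨τ^e⟩]`, and has Schur index `s`. -/
theorem statement19 {p : ℕ} [Fact p.Prime] (hodd : Odd p)
    {K D : Type*} [Field K] [Algebra ℚ_[p] K] [FiniteDimensional ℚ_[p] K]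
    [DivisionRing D] [Algebra K D] [FiniteDimensional K D]
    (hcentral : ∀ z : D, z ∈ Subring.center D ↔ ∃ y : K, algebraMap K D y = z)
    (s : ℕ) (hs : Module.finrank K D = s ^ 2)
    (τD : D ≃+* D) (τK : K ≃+* K)
    (hcompat : ∀ y : K, τD (algebraMap K D y) = algebraMap K D (τK y))
    (m : ℕ) (hτD : orderOf τD = p ^ m) (hτK : orderOf τK = p ^ m)
    (e : ℕ) (he : e ∣ p ^ m)
    (qτ : ℕ) (hqτ : 1 < qτ) (hsq : s ∣ qτ - 1)
    (ω : K) (hω : IsPrimitiveRoot ω (qτ - 1)) (hωfix : τK ω = ω) :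
    (∀ x : ↥(fixedSubring (τD ^ e)),
      x ∈ Subring.center ↥(fixedSubring (τD ^ e)) ↔
        ∃ y : K, (τK ^ e) y = y ∧ algebraMap K D y = (x : D)) ∧
    Module.finrank ↥(fixedSubring (τD ^ e)) D =
      Module.finrank ↥(fixedSubfield (τK ^ e)) K ∧
    Module.finrank ↥(Subring.center ↥(fixedSubring (τD ^ e)))
      ↥(fixedSubring (τD ^ e)) = s ^ 2 :=
  statement19_general hcentral s hs τD τK hcompat m hτD hτK e
end
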